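/- arXiv:1210.2204 — 3 statements merged into one kernel-verified Lean document; each statement's English description precedes it below -/
import Mathlib

section
/- Let H be a real Hilbert space, let G be a group of orthogonal transformations (linear isometric automorphisms) of H, and let W and R be G-stable subsets of H such that W is weakly compact and, for every natural number k, the orbit space R^k/G (the quotient of R^k, with the topology induced by the Hilbert norm, by the diagonal G-action) is compact. Then the pseudometric space (W, d_R/G) is compact, where (d_R/G)(x,y) = inf_{g∈G} d_R(x, g·y); equivalently, the orbit space (W, d_R)/G is compact. -/
open scoped InnerProductSpace
open Filter

noncomputable section

/-- The topology induced by a pseudometric `d` : the one generated by the open balls of `d`. -/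
def ballTopology {X : Type*} (d : X → X → ℝ) : TopologicalSpace X :=
  TopologicalSpace.generateFrom {s | ∃ x ε, 0 < ε ∧ s = {y | d x y < ε}}

/-- The seminorm `‖x‖_R = sup_{r ∈ R} |⟨r,x⟩|` associated to a bounded set `R`. -/
def normR {H : Type*} [NormedAddCommGroup H] [InnerProductSpace ℝ H] (R : Set H) (x : H) : ℝ :=
  ⨆ r : R, |⟪(r : H), x⟫_ℝ|

/-- The pseudometric `d_R(x,y) = ‖x - y‖_R`. -/
def dR {H : Type*} [NormedAddCommGroup H] [InnerProductSpace ℝ H] (R : Set H) (x y : H) : ℝ :=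
  normR R (x - y)

/-!
The pseudometric `d_R/G` is totally bounded and complete on `W`.

Total boundedness: `R` and `W` are norm bounded (the first by compactness of `R/G`, the second by
the uniform boundedness principle). A greedy algorithm writes every `w ∈ W` as `∑ aᵢ rᵢ` up to
`ε` in `‖·‖_R`, with `K` terms `rᵢ ∈ R` and coefficients `|aᵢ| ≤ A`, where `K` and `A` depend
only on `ε` and the norm bounds. Finite nets of `Rᴷ/G` and of the cube `[-A, A]ᴷ` then give a
finite `ε`-net of `W` for `d_R/G`.

Completeness: if `(d_R/G)(uₙ, uₙ₊₁) < 2⁻ⁿ`, moving each `uₙ` within its orbit produces a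
`d_R`-Cauchy sequence in `W`. It has a weak cluster point in `W`, which is a `d_R`-limit of it
because `‖·‖_R` is weakly lower semicontinuous, hence a `d_R/G`-limit of `(uₙ)`.
-/

open Topology Metric Bornology

section BallTopology

variable {X : Type*}

lemma ballTopology_dist [PseudoMetricSpace X] :
    ballTopology (dist : X → X → ℝ) = UniformSpace.toTopologicalSpace := by
  have hball (x : X) (ε : ℝ) : {y | dist x y < ε} = ball x ε := by ext; simp [dist_comm]
  refine le_antisymm (fun U hU => ?_) (le_generateFrom ?_)
  · refine (@isOpen_iff_forall_mem_open _ (ballTopology dist) _).2 fun x hx => ?_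
    obtain ⟨ε, hε, hεU⟩ := Metric.isOpen_iff.1 hU x hx
    exact ⟨ball x ε, hεU,
      TopologicalSpace.isOpen_generateFrom_of_mem ⟨x, ε, hε, (hball x ε).symm⟩, mem_ball_self hε⟩
  · rintro _ ⟨x, ε, -, rfl⟩
    exact hball x ε ▸ isOpen_ball

lemma exists_finite_net_of_isCompact_ballTopology {d : X → X → ℝ} {S : Set X}
    (hS : @IsCompact X (ballTopology d) S) (hself : ∀ x ∈ S, d x x ≤ 0) {δ : ℝ} (hδ : 0 < δ) :
    ∃ t : Finset X, ∀ x ∈ S, ∃ c ∈ t, d c x < δ := by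
  obtain ⟨t, ht⟩ := @IsCompact.elim_finite_subcover _ (ballTopology d) _ _ hS
    (fun c => {y | d c y < δ})
    (fun c => TopologicalSpace.isOpen_generateFrom_of_mem ⟨c, δ, hδ, rfl⟩)
    (fun x hx => Set.mem_iUnion.2 ⟨x, (hself x hx).trans_lt hδ⟩)
  exact ⟨t, fun x hx => by simpa using ht hx⟩

lemma isCompact_ballTopology {d : X → X → ℝ} (d_self : ∀ x, d x x = 0)
    (d_comm : ∀ x y, d x y = d y x) (d_triangle : ∀ x y z, d x z ≤ d x y + d y z) {S : Set X}
    (hnet : ∀ ε > 0, ∃ V : Set X, V.Finite ∧ ∀ x ∈ S, ∃ v ∈ V, d v x < ε)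
    (hlim : ∀ u : ℕ → X, (∀ n, u n ∈ S) → (∀ n, d (u n) (u (n + 1)) < (1 / 2) ^ n) →
      ∃ x ∈ S, Tendsto (fun n => d x (u n)) atTop (𝓝 0)) :
    @IsCompact X (ballTopology d) S := by
  let _ : PseudoMetricSpace X :=
    { dist := d, dist_self := d_self, dist_comm := d_comm, dist_triangle := d_triangle }
  rw [show ballTopology d = ballTopology (dist : X → X → ℝ) from rfl, ballTopology_dist,
    isCompact_iff_totallyBounded_isComplete]
  refine ⟨Metric.totallyBounded_iff.2 fun ε hε => ?_, ?_⟩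
  · obtain ⟨V, hV, hVS⟩ := hnet ε hε
    refine ⟨V, hV, fun x hx => ?_⟩
    obtain ⟨v, hv, hvx⟩ := hVS x hx
    exact Set.mem_biUnion hv (show d x v < ε by rwa [d_comm])
  · rw [← completeSpace_coe_iff_isComplete]
    refine Metric.complete_of_convergent_controlled_sequences (fun n => (1 / 2) ^ n)
      (fun n => by positivity) fun u hu => ?_
    obtain ⟨x, hxS, hx⟩ := hlim (fun n => u n) (fun n => (u n).2)
      fun n => hu n n (n + 1) le_rfl n.le_succ
    refine ⟨⟨x, hxS⟩, tendsto_iff_dist_tendsto_zero.2 ?_⟩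
    simp only [Subtype.dist_eq, dist_comm]
    exact hx

end BallTopology

section Seminorm

variable {H : Type*} [NormedAddCommGroup H] [InnerProductSpace ℝ H] {R : Set H}

lemma bddAbove_abs_inner (hR : IsBounded R) (x : H) :
    BddAbove (Set.range fun r : R => |⟪(r : H), x⟫_ℝ|) := by
  obtain ⟨C, hC⟩ := hR.exists_norm_le
  refine ⟨C * ‖x‖, ?_⟩
  rintro _ ⟨r, rfl⟩
  exact (abs_real_inner_le_norm _ _).trans (mul_le_mul_of_nonneg_right (hC r r.2) (norm_nonneg x))

lemma normR_nonneg (R : Set H) (x : H) : 0 ≤ normR R x :=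
  Real.iSup_nonneg fun _ => abs_nonneg _

lemma abs_inner_le_normR (hR : IsBounded R) {r : H} (hr : r ∈ R) (x : H) :
    |⟪r, x⟫_ℝ| ≤ normR R x :=
  le_ciSup (bddAbove_abs_inner hR x) ⟨r, hr⟩

lemma normR_le {x : H} {c : ℝ} (hc : 0 ≤ c) (h : ∀ r ∈ R, |⟪r, x⟫_ℝ| ≤ c) : normR R x ≤ c :=
  Real.iSup_le (fun r => h r r.2) hc

lemma normR_le_mul_norm {C : ℝ} (hC : ∀ r ∈ R, ‖r‖ ≤ C) (hC0 : 0 ≤ C) (x : H) :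
    normR R x ≤ C * ‖x‖ :=
  normR_le (by positivity) fun r hr =>
    (abs_real_inner_le_norm r x).trans (mul_le_mul_of_nonneg_right (hC r hr) (norm_nonneg x))

lemma normR_neg (R : Set H) (x : H) : normR R (-x) = normR R x := by
  simp [normR, inner_neg_right]

lemma normR_add_le (hR : IsBounded R) (x y : H) : normR R (x + y) ≤ normR R x + normR R y :=
  normR_le (add_nonneg (normR_nonneg R x) (normR_nonneg R y)) fun r hr => by
    rw [inner_add_right]
    exact (abs_add_le _ _).trans
      (add_le_add (abs_inner_le_normR hR hr x) (abs_inner_le_normR hR hr y))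

lemma normR_map_le (hR : IsBounded R) {g : H ≃ₗᵢ[ℝ] H} (hg : ∀ r ∈ R, g.symm r ∈ R) (x : H) :
    normR R (g x) ≤ normR R x :=
  normR_le (normR_nonneg R x) fun r hr => by
    rw [← g.apply_symm_apply r, g.inner_map_map]
    exact abs_inner_le_normR hR (hg r hr) x

variable {G : Subgroup (H ≃ₗᵢ[ℝ] H)}

lemma normR_map (hR : IsBounded R) (hst : ∀ g ∈ G, ∀ r ∈ R, g r ∈ R)
    {g : H ≃ₗᵢ[ℝ] H} (hg : g ∈ G) (x : H) : normR R (g x) = normR R x := by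
  refine le_antisymm (normR_map_le hR (fun r hr => hst g⁻¹ (G.inv_mem hg) r hr) x) ?_
  simpa using normR_map_le hR (g := g.symm) (fun r hr => hst g hg r hr) (g x)

lemma dR_self (R : Set H) (x : H) : dR R x x = 0 := by
  simp [dR, normR]

lemma dR_comm (R : Set H) (x y : H) : dR R x y = dR R y x := by
  rw [dR, dR, ← normR_neg, neg_sub]

lemma dR_triangle (hR : IsBounded R) (x y z : H) : dR R x z ≤ dR R x y + dR R y z := by
  simpa [dR] using normR_add_le hR (x - y) (y - z)

lemma dR_map (hR : IsBounded R) (hst : ∀ g ∈ G, ∀ r ∈ R, g r ∈ R)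
    {g : H ≃ₗᵢ[ℝ] H} (hg : g ∈ G) (x y : H) : dR R (g x) (g y) = dR R x y := by
  rw [dR, ← map_sub, normR_map hR hst hg, dR]

end Seminorm

section OrbitDist

variable {H : Type*} [NormedAddCommGroup H] [InnerProductSpace ℝ H]
  {G : Subgroup (H ≃ₗᵢ[ℝ] H)} {R : Set H}

/-- The quotient pseudometric `d_R/G`. -/
def orbitDist (G : Subgroup (H ≃ₗᵢ[ℝ] H)) (R : Set H) (x y : H) : ℝ :=
  ⨅ g : G, dR R x ((g : H ≃ₗᵢ[ℝ] H) y)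

lemma orbitDist_le_dR {g : H ≃ₗᵢ[ℝ] H} (hg : g ∈ G) (x y : H) :
    orbitDist G R x y ≤ dR R x (g y) :=
  ciInf_le ⟨0, by rintro _ ⟨g, rfl⟩; exact normR_nonneg _ _⟩ (⟨g, hg⟩ : G)

lemma le_orbitDist {x y : H} {c : ℝ} (h : ∀ g ∈ G, c ≤ dR R x (g y)) : c ≤ orbitDist G R x y :=
  le_ciInf fun g => h g g.2

lemma orbitDist_self (x : H) : orbitDist G R x x = 0 :=
  le_antisymm ((orbitDist_le_dR G.one_mem x x).trans_eq (dR_self R x))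
    (le_orbitDist fun _ _ => normR_nonneg _ _)

lemma orbitDist_comm (hR : IsBounded R) (hst : ∀ g ∈ G, ∀ r ∈ R, g r ∈ R) (x y : H) :
    orbitDist G R x y = orbitDist G R y x := by
  have key (x y : H) : orbitDist G R y x ≤ orbitDist G R x y := le_orbitDist fun g hg => by
    calc orbitDist G R y x ≤ dR R y (g⁻¹ x) := orbitDist_le_dR (G.inv_mem hg) y x
      _ = dR R x (g y) := by
        rw [dR_comm, ← dR_map hR hst hg, LinearIsometryEquiv.coe_inv, g.apply_symm_apply]
  exact le_antisymm (key y x) (key x y)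

lemma orbitDist_triangle (hR : IsBounded R) (hst : ∀ g ∈ G, ∀ r ∈ R, g r ∈ R) (x y z : H) :
    orbitDist G R x z ≤ orbitDist G R x y + orbitDist G R y z := by
  rw [← sub_le_iff_le_add']
  refine le_orbitDist fun h hh => ?_
  rw [sub_le_comm]
  refine le_orbitDist fun g hg => ?_
  rw [sub_le_iff_le_add]
  calc orbitDist G R x z ≤ dR R x ((g * h) z) := orbitDist_le_dR (G.mul_mem hg hh) x z
    _ ≤ dR R x (g y) + dR R (g y) (g (h z)) := dR_triangle hR _ _ _
    _ = dR R x (g y) + dR R y (h z) := by rw [dR_map hR hst hg]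

end OrbitDist

section Bounds

variable {H : Type*} [NormedAddCommGroup H] [InnerProductSpace ℝ H]
  {G : Subgroup (H ≃ₗᵢ[ℝ] H)} {R : Set H}

lemma exists_finite_orbit_net {k : ℕ} {S : Set (Fin k → H)}
    (hS : @IsCompact (Fin k → H)
      (ballTopology fun x y => ⨅ g : G, ⨆ i, ‖x i - (g : H ≃ₗᵢ[ℝ] H) (y i)‖) S)
    {δ : ℝ} (hδ : 0 < δ) :
    ∃ t : Finset (Fin k → H), ∀ x ∈ S, ∃ c ∈ t, ∃ g ∈ G, ∀ i, ‖c i - g (x i)‖ < δ := by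
  have hself (x : Fin k → H) : ⨅ g : G, ⨆ i, ‖x i - (g : H ≃ₗᵢ[ℝ] H) (x i)‖ ≤ 0 :=
    ciInf_le_of_le ⟨0, by rintro _ ⟨g, rfl⟩; exact Real.iSup_nonneg fun _ => norm_nonneg _⟩ 1
      (by simp)
  obtain ⟨t, ht⟩ := exists_finite_net_of_isCompact_ballTopology hS (fun x _ => hself x) hδ
  refine ⟨t, fun x hx => ?_⟩
  obtain ⟨c, hc, hcx⟩ := ht x hx
  obtain ⟨g, hg⟩ := exists_lt_of_ciInf_lt hcx
  exact ⟨c, hc, g, g.2, fun i => (le_ciSup (Set.finite_range _).bddAbove i).trans_lt hg⟩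

lemma isBounded_of_isCompact_orbitSpace_one
    (hR : @IsCompact (Fin 1 → H)
      (ballTopology fun x y => ⨅ g : G, ⨆ i, ‖x i - (g : H ≃ₗᵢ[ℝ] H) (y i)‖) {x | ∀ i, x i ∈ R}) :
    IsBounded R := by
  obtain ⟨t, ht⟩ := exists_finite_orbit_net hR one_pos
  obtain ⟨C, hC⟩ := ((t.finite_toSet.image fun c => c 0).isBounded).exists_norm_le
  refine isBounded_iff_forall_norm_le.2 ⟨C + 1, fun r hr => ?_⟩
  obtain ⟨c, hc, g, -, hcg⟩ := ht (fun _ => r) fun _ => hr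
  have h1 := norm_sub_norm_le (g r) (c 0)
  rw [norm_sub_rev, g.norm_map] at h1
  linarith [hcg 0, hC (c 0) ⟨c, hc, rfl⟩]

theorem isBounded_of_isCompact_toWeakSpace {𝕜 X : Type*} [RCLike 𝕜] [NormedAddCommGroup X]
    [NormedSpace 𝕜 X] {W : Set X} (hW : IsCompact (toWeakSpace 𝕜 X '' W)) : IsBounded W := by
  obtain ⟨C, hC⟩ := isBounded_iff_forall_norm_le.1 <| WeakDual.isBounded_iff_isVonNBounded.2 <|
    (hW.image (NormedSpace.inclusionInDoubleDualWeak 𝕜 X).continuous).isVonNBounded 𝕜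
  refine isBounded_iff_forall_norm_le.2 ⟨C, fun w hw => ?_⟩
  rw [← (NormedSpace.inclusionInDoubleDualLi 𝕜 (E := X)).norm_map w]
  exact hC _ ⟨_, ⟨w, hw, rfl⟩, rfl⟩

end Bounds

lemma norm_sum_smul_sub_sum_smul_le {ι E : Type*} [Fintype ι] [SeminormedAddCommGroup E]
    [NormedSpace ℝ E] {a b : ι → ℝ} {x y : ι → E} {A C δ : ℝ} (hb : ∀ i, |b i| ≤ A)
    (hab : ∀ i, |b i - a i| ≤ δ) (hxy : ∀ i, ‖x i - y i‖ ≤ δ) (hy : ∀ i, ‖y i‖ ≤ C) :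
    ‖∑ i, b i • x i - ∑ i, a i • y i‖ ≤ Fintype.card ι * ((A + C) * δ) := by
  rw [← Finset.sum_sub_distrib]
  refine (norm_sum_le Finset.univ fun i => b i • x i - a i • y i).trans <|
    (Finset.sum_le_card_nsmul _ _ _ fun i _ => ?_).trans_eq (by rw [Finset.card_univ, nsmul_eq_mul])
  have hsplit : b i • x i - a i • y i = b i • (x i - y i) + (b i - a i) • y i := by
    rw [smul_sub, sub_smul]; abel
  rw [hsplit]
  calc ‖b i • (x i - y i) + (b i - a i) • y i‖
      ≤ |b i| * ‖x i - y i‖ + |b i - a i| * ‖y i‖ := by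
        simpa only [norm_smul, Real.norm_eq_abs] using
          norm_add_le (b i • (x i - y i)) ((b i - a i) • y i)
    _ ≤ A * δ + δ * C := add_le_add
        (mul_le_mul (hb i) (hxy i) (norm_nonneg _) ((abs_nonneg _).trans (hb i)))
        (mul_le_mul (hab i) (hy i) (norm_nonneg _) ((abs_nonneg _).trans (hab i)))
    _ = (A + C) * δ := by ring

section Greedy

variable {H : Type*} [NormedAddCommGroup H] [InnerProductSpace ℝ H] {R : Set H} {C ε : ℝ}

-- `γ • r` is the orthogonal projection of `y` onto `ℝ r`, for an `r ∈ R` with `ε < |⟪r, y⟫|`.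
lemma exists_greedy_step (hC : ∀ r ∈ R, ‖r‖ ≤ C) (hε : 0 < ε) {y : H} (hy : ‖y‖ ≤ C)
    (hlt : ε < normR R y) :
    ∃ r ∈ R, ∃ γ : ℝ, |γ| ≤ C ^ 2 / ε ∧ ‖y - γ • r‖ ^ 2 + (ε / C) ^ 2 ≤ ‖y‖ ^ 2 := by
  have : Nonempty R := by
    by_contra h
    rw [not_nonempty_iff] at h
    simp only [normR, Real.iSup_of_isEmpty] at hlt
    linarith
  obtain ⟨⟨r, hr⟩, hrt⟩ := exists_lt_of_lt_ciSup hlt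
  set t := ⟪r, y⟫_ℝ
  have ht : |t| ≤ ‖r‖ * C :=
    (abs_real_inner_le_norm r y).trans (mul_le_mul_of_nonneg_left hy (norm_nonneg r))
  have hεr : ε ≤ ‖r‖ * C := hrt.le.trans ht
  have hr0 : 0 < ‖r‖ := by
    rcases (norm_nonneg r).eq_or_lt with h | h
    · rw [← h, zero_mul] at hεr; linarith
    · exact h
  refine ⟨r, hr, t / ‖r‖ ^ 2, ?_, ?_⟩
  · rw [abs_div, abs_of_nonneg (sq_nonneg ‖r‖), div_le_div_iff₀ (by positivity) hε]
    calc |t| * ε ≤ (‖r‖ * C) * (‖r‖ * C) := mul_le_mul ht hεr hε.le (hε.le.trans hεr)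
      _ = C ^ 2 * ‖r‖ ^ 2 := by ring
  · have hproj : ‖y - (t / ‖r‖ ^ 2) • r‖ ^ 2 = ‖y‖ ^ 2 - t ^ 2 / ‖r‖ ^ 2 := by
      rw [norm_sub_sq_real, inner_smul_right, norm_smul, real_inner_comm, Real.norm_eq_abs,
        mul_pow, sq_abs]
      field_simp
      ring
    have hgain : (ε / C) ^ 2 ≤ t ^ 2 / ‖r‖ ^ 2 := by
      rw [div_pow, ← sq_abs t]
      exact div_le_div₀ (sq_nonneg _) (pow_le_pow_left₀ hε.le hrt.le 2) (by positivity)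
        (pow_le_pow_left₀ (norm_nonneg r) (hC r hr) 2)
    linarith

lemma exists_sum_smul_approx (hRne : R.Nonempty) (hC0 : 0 < C) (hC : ∀ r ∈ R, ‖r‖ ≤ C)
    (hε : 0 < ε) (n : ℕ) {y : H} (hy : ‖y‖ ≤ C) (hyn : ‖y‖ ^ 2 ≤ n * (ε / C) ^ 2) :
    ∃ (a : Fin n → ℝ) (r : Fin n → H), (∀ i, |a i| ≤ C ^ 2 / ε) ∧ (∀ i, r i ∈ R) ∧
      normR R (y - ∑ i, a i • r i) ≤ ε := by
  obtain ⟨r₀, hr₀⟩ := hRne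
  induction n generalizing y with
  | zero =>
    obtain rfl : y = 0 := by simpa using hyn
    exact ⟨Fin.elim0, Fin.elim0, Fin.rec0, Fin.rec0, by simpa [normR] using hε.le⟩
  | succ n ih =>
    by_cases hle : normR R y ≤ ε
    · exact ⟨0, fun _ => r₀, fun _ => by simp only [Pi.zero_apply, abs_zero]; positivity,
        fun _ => hr₀, by simpa using hle⟩
    obtain ⟨r, hr, γ, hγ, hstep⟩ := exists_greedy_step hC hε hy (not_le.1 hle)
    have hy' : ‖y - γ • r‖ ≤ C :=
      (pow_le_pow_iff_left₀ (norm_nonneg _) (norm_nonneg y) two_ne_zero).1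
        (by nlinarith) |>.trans hy
    obtain ⟨a, rs, ha, hrs, happrox⟩ := ih hy' (by push_cast at hyn; linarith)
    refine ⟨Fin.cons γ a, Fin.cons r rs, Fin.cases hγ ha, Fin.cases hr hrs, ?_⟩
    simpa only [Fin.sum_univ_succ, Fin.cons_zero, Fin.cons_succ, sub_add_eq_sub_sub]
      using happrox

end Greedy

section Net

variable {H : Type*} [NormedAddCommGroup H] [InnerProductSpace ℝ H]
  {G : Subgroup (H ≃ₗᵢ[ℝ] H)} {R W : Set H}

lemma orbitDist_sum_smul_le (hR : IsBounded R) (hst : ∀ g ∈ G, ∀ r ∈ R, g r ∈ R) {C A δ : ℝ}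
    (hC : ∀ r ∈ R, ‖r‖ ≤ C) (hC0 : 0 ≤ C) {k : ℕ} {a b : Fin k → ℝ} {r c : Fin k → H}
    (hr : ∀ i, r i ∈ R) {g : H ≃ₗᵢ[ℝ] H} (hg : g ∈ G) (hb : ∀ i, |b i| ≤ A)
    (hba : ∀ i, |b i - a i| ≤ δ) (hcg : ∀ i, ‖c i - g (r i)‖ ≤ δ) (w : H) :
    orbitDist G R (∑ i, b i • c i) w ≤ C * (k * ((A + C) * δ)) + normR R (w - ∑ i, a i • r i) :=
  calc orbitDist G R (∑ i, b i • c i) w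
      ≤ dR R (∑ i, b i • c i) (g w) := orbitDist_le_dR hg _ _
    _ ≤ dR R (∑ i, b i • c i) (g (∑ i, a i • r i)) + dR R (g (∑ i, a i • r i)) (g w) :=
        dR_triangle hR _ _ _
    _ ≤ C * (k * ((A + C) * δ)) + normR R (w - ∑ i, a i • r i) := by
        gcongr
        · rw [dR, map_sum]
          refine (normR_le_mul_norm hC hC0 _).trans (mul_le_mul_of_nonneg_left ?_ hC0)
          simpa using norm_sum_smul_sub_sum_smul_le hb hba hcg
            fun i => (g.norm_map (r i)).trans_le (hC _ (hr i))
        · rw [dR_map hR hst hg, dR_comm, dR]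

lemma exists_finite_orbitDist_net (hR : IsBounded R) (hW : IsBounded W)
    (hst : ∀ g ∈ G, ∀ r ∈ R, g r ∈ R)
    (hRk : ∀ k : ℕ, @IsCompact (Fin k → H)
      (ballTopology fun x y => ⨅ g : G, ⨆ i, ‖x i - (g : H ≃ₗᵢ[ℝ] H) (y i)‖) {x | ∀ i, x i ∈ R})
    {ε : ℝ} (hε : 0 < ε) :
    ∃ V : Set H, V.Finite ∧ ∀ w ∈ W, ∃ v ∈ V, orbitDist G R v w < ε := by
  rcases R.eq_empty_or_nonempty with rfl | hRne
  · exact ⟨{0}, Set.finite_singleton 0, fun w _ => ⟨0, rfl, by simpa [orbitDist, dR, normR]⟩⟩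
  obtain ⟨C, hC0, hC⟩ := (hR.union hW).exists_pos_norm_le
  have hCR : ∀ r ∈ R, ‖r‖ ≤ C := fun r hr => hC r (.inl hr)
  set K : ℕ := ⌈C ^ 2 / (ε / 2 / C) ^ 2⌉₊
  set A := C ^ 2 / (ε / 2)
  obtain ⟨δ, hδ, hδε⟩ := exists_pos_mul_lt (half_pos hε) (C * (K * (A + C)))
  obtain ⟨t, ht⟩ := exists_finite_orbit_net (hRk K) hδ
  obtain ⟨B, hBcube, hB, hBcover⟩ := finite_cover_balls_of_compact
    (isCompact_univ_pi fun _ : Fin K => isCompact_Icc (a := -A) (b := A)) hδ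
  refine ⟨(fun p : (Fin K → ℝ) × (Fin K → H) => ∑ i, p.1 i • p.2 i) '' B ×ˢ t,
    (hB.prod t.finite_toSet).image _, fun w hw => ?_⟩
  have hwK : ‖w‖ ^ 2 ≤ K * (ε / 2 / C) ^ 2 := by
    refine (pow_le_pow_left₀ (norm_nonneg w) (hC w (.inr hw)) 2).trans ?_
    exact (div_le_iff₀ (by positivity)).1 (Nat.le_ceil _)
  obtain ⟨a, r, ha, hr, happrox⟩ :=
    exists_sum_smul_approx hRne hC0 hCR (half_pos hε) K (hC w (.inr hw)) hwK
  obtain ⟨c, hc, g, hg, hcg⟩ := ht r hr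
  obtain ⟨b, hbB, hab⟩ :=
    Set.mem_iUnion₂.1 (hBcover (Set.mem_univ_pi.2 fun i => abs_le.1 (ha i)))
  have hb : ∀ i, |b i| ≤ A := fun i => abs_le.2 (Set.mem_univ_pi.1 (hBcube hbB) i)
  have hba : ∀ i, |b i - a i| ≤ δ := fun i => by
    rw [← Real.dist_eq, dist_comm]
    exact ((dist_pi_lt_iff hδ).1 (mem_ball.1 hab) i).le
  refine ⟨∑ i, b i • c i, ⟨(b, c), ⟨hbB, hc⟩, rfl⟩, ?_⟩
  have hKδ : C * (K * ((A + C) * δ)) = C * (K * (A + C)) * δ := by ring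
  linarith [orbitDist_sum_smul_le hR hst hCR hC0.le hr hg hb hba (fun i => (hcg i).le) w]

end Net

section Limit

variable {H : Type*} [NormedAddCommGroup H] [InnerProductSpace ℝ H]
  {G : Subgroup (H ≃ₗᵢ[ℝ] H)} {R W : Set H}

lemma lowerSemicontinuous_dR_toWeakSpace_symm (hR : IsBounded R) (x : H) :
    LowerSemicontinuous fun p : WeakSpace ℝ H => dR R x ((toWeakSpace ℝ H).symm p) := by
  simp only [dR, normR, inner_sub_right]
  refine lowerSemicontinuous_ciSup
    (fun p => by simpa only [inner_sub_right] using bddAbove_abs_inner hR (x - _)) fun r => ?_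
  exact (continuous_const.sub
    (WeakBilin.eval_continuous _ (innerSL ℝ (r : H)))).abs.lowerSemicontinuous

lemma dR_le_of_clusterPt (hR : IsBounded R) {x z : H} {y : ℕ → H} {c : ℝ}
    (hc : ∀ᶠ m in atTop, dR R x (y m) ≤ c)
    (hz : ClusterPt (toWeakSpace ℝ H z) (map (fun m => toWeakSpace ℝ H (y m)) atTop)) :
    dR R x z ≤ c := by
  have hclosed := (lowerSemicontinuous_dR_toWeakSpace_symm hR x).isClosed_preimage c
  simpa using hclosed.closure_subset (hz.mem_closure_of_mem _ (mem_map.2 hc))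

lemma dR_le_of_dR_succ_lt (hR : IsBounded R) {y : ℕ → H}
    (hy : ∀ n, dR R (y n) (y (n + 1)) < (1 / 2) ^ n) {n m : ℕ} (hnm : n ≤ m) :
    dR R (y n) (y m) ≤ 2 * (1 / 2) ^ n := by
  suffices dR R (y n) (y m) ≤ 2 * ((1 / 2) ^ n - (1 / 2) ^ m) by
    linarith [pow_pos (one_half_pos (α := ℝ)) m]
  induction m, hnm using Nat.le_induction with
  | base => simp [dR_self]
  | succ m _ ih =>
    calc dR R (y n) (y (m + 1)) ≤ dR R (y n) (y m) + dR R (y m) (y (m + 1)) :=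
          dR_triangle hR _ _ _
      _ ≤ 2 * ((1 / 2) ^ n - (1 / 2) ^ (m + 1)) := by rw [pow_succ]; linarith [hy m]

-- `hₙ = g₀ ⋯ gₙ₋₁` for `gₖ ∈ G` with `d_R(uₖ, gₖ uₖ₊₁) < bₖ`.
lemma exists_orbit_lift (hR : IsBounded R) (hst : ∀ g ∈ G, ∀ r ∈ R, g r ∈ R) {u : ℕ → H}
    {b : ℕ → ℝ} (hu : ∀ n, orbitDist G R (u n) (u (n + 1)) < b n) :
    ∃ h : ℕ → H ≃ₗᵢ[ℝ] H, (∀ n, h n ∈ G) ∧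
      ∀ n, dR R (h n (u n)) (h (n + 1) (u (n + 1))) < b n := by
  choose g hg using fun n => exists_lt_of_ciInf_lt (hu n)
  refine ⟨fun n => ((List.range n).map fun k => (g k : H ≃ₗᵢ[ℝ] H)).prod,
    fun n => G.list_prod_mem (by simp), fun n => ?_⟩
  dsimp only
  rw [List.prod_range_succ, LinearIsometryEquiv.coe_mul, Function.comp_apply,
    dR_map hR hst (G.list_prod_mem (by simp))]
  exact hg n

lemma exists_tendsto_orbitDist (hR : IsBounded R) (hst : ∀ g ∈ G, ∀ r ∈ R, g r ∈ R)
    (hWst : ∀ g ∈ G, ∀ w ∈ W, g w ∈ W) (hW : IsCompact (toWeakSpace ℝ H '' W))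
    {u : ℕ → H} (huW : ∀ n, u n ∈ W) (hu : ∀ n, orbitDist G R (u n) (u (n + 1)) < (1 / 2) ^ n) :
    ∃ z ∈ W, Tendsto (fun n => orbitDist G R z (u n)) atTop (𝓝 0) := by
  obtain ⟨h, hG, hh⟩ := exists_orbit_lift hR hst hu
  obtain ⟨_, ⟨z, hzW, rfl⟩, hz⟩ := hW (f := map (fun n => toWeakSpace ℝ H (h n (u n))) atTop)
    (le_principal_iff.2 (mem_map.2 (univ_mem' fun n => ⟨_, hWst _ (hG n) _ (huW n), rfl⟩)))
  have hlim : Tendsto (fun n : ℕ => 2 * (1 / 2 : ℝ) ^ n) atTop (𝓝 0) := by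
    simpa using (tendsto_pow_atTop_nhds_zero_of_lt_one (r := (1 / 2 : ℝ)) (by norm_num)
      (by norm_num)).const_mul 2
  refine ⟨z, hzW, squeeze_zero (fun n => le_orbitDist fun _ _ => normR_nonneg _ _)
    (fun n => ?_) hlim⟩
  calc orbitDist G R z (u n) ≤ dR R z (h n (u n)) := orbitDist_le_dR (hG n) _ _
    _ = dR R (h n (u n)) z := dR_comm _ _ _
    _ ≤ 2 * (1 / 2) ^ n := dR_le_of_clusterPt hR
        (eventually_atTop.2 ⟨n, fun m hm => dR_le_of_dR_succ_lt hR hh hm⟩) hz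

end Limit

theorem stmt0_general {H : Type*} [NormedAddCommGroup H] [InnerProductSpace ℝ H]
    (G : Subgroup (H ≃ₗᵢ[ℝ] H)) (W R : Set H)
    (hWstable : ∀ g ∈ G, ∀ w ∈ W, g w ∈ W)
    (hRstable : ∀ g ∈ G, ∀ r ∈ R, g r ∈ R)
    (hW : IsCompact (toWeakSpace ℝ H '' W))
    (hR : ∀ k : ℕ, @IsCompact (Fin k → H)
      (ballTopology (fun x y => ⨅ g : G, ⨆ i, ‖x i - (g : H ≃ₗᵢ[ℝ] H) (y i)‖))
      {x | ∀ i, x i ∈ R}) :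
    @IsCompact H (ballTopology (fun x y => ⨅ g : G, dR R x ((g : H ≃ₗᵢ[ℝ] H) y))) W := by
  have hRb : IsBounded R := isBounded_of_isCompact_orbitSpace_one (hR 1)
  exact isCompact_ballTopology (d := orbitDist G R) orbitDist_self
    (orbitDist_comm hRb hRstable) (orbitDist_triangle hRb hRstable)
    (fun _ hε => exists_finite_orbitDist_net hRb (isBounded_of_isCompact_toWeakSpace hW)
      hRstable hR hε)
    (fun _ huW hu => exists_tendsto_orbitDist hRb hRstable hWstable hW huW hu)

/-- Let `H` be a real Hilbert space, `G` a group of orthogonal transformations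
of `H`, and `W`, `R` `G`-stable subsets of `H` with `W` weakly compact and each orbit space
`R^k/G` (norm topology, diagonal action, i.e. the quotient pseudometric of the sup-metric)
compact.  Then `W`, equipped with the quotient pseudometric
`(d_R/G)(x,y) = inf_{g ∈ G} d_R(x, g·y)`, is compact. -/
theorem stmt0 {H : Type*} [NormedAddCommGroup H] [InnerProductSpace ℝ H] [CompleteSpace H]
    (G : Subgroup (H ≃ₗᵢ[ℝ] H)) (W R : Set H)
    (hWstable : ∀ g ∈ G, ∀ w ∈ W, g w ∈ W)
    (hRstable : ∀ g ∈ G, ∀ r ∈ R, g r ∈ R)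
    (hW : IsCompact (toWeakSpace ℝ H '' W))
    (hR : ∀ k : ℕ, @IsCompact (Fin k → H)
      (ballTopology (fun x y => ⨅ g : G, ⨆ i, ‖x i - (g : H ≃ₗᵢ[ℝ] H) (y i)‖))
      {x | ∀ i, x i ∈ R}) :
    @IsCompact H (ballTopology (fun x y => ⨅ g : G, dR R x ((g : H ≃ₗᵢ[ℝ] H) y))) W :=
  stmt0_general G W R hWstable hRstable hW hR
end
end

section
/- Let C be a set and H_k := ℓ²(C^k). For h ∈ H_k^{S_k} and c₁,…,c_l ∈ C with l ≤ k, let h(c₁,…,c_l) ∈ H_{k−l} denote the slice (c_{l+1},…,c_k) ↦ h(c₁,…,c_k). Let k₁,…,k_n ∈ ℕ, let h_i ∈ H_{k_i}^{S_{k_i}} for i = 1,…,n, and let F = ([n], E) be a (loopless) graph with deg(i) ≤ k_i for each i. Then Σ_{φ:E→C} ∏_{v∈[n]} ‖h_v(φ(δ(v)))‖ ≤ ∏_{v∈[n]} ‖h_v‖, where δ(v) is the tuple of edges incident with v and ‖h_v(φ(δ(v)))‖ is the ℓ²(C^{k_v−deg(v)})-norm of the slice obtained by substituting the colours φ assigns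 to the edges at v. -/
/-!
Sum out the colours of the edges one at a time. Let `M_v(φ)` be the squared norm of the slice of
`h_v` fixed by the colours `φ` of the edges still coloured. Summing out the colour `c` of an edge
`uw` affects only the factors at `u` and `w`, and by Cauchy–Schwarz
`∑_c M_u(φ, c)^½ M_w(φ, c)^½ ≤ (∑_c M_u(φ, c))^½ (∑_c M_w(φ, c))^½ ≤ M_u(φ)^½ M_w(φ)^½`,
because the slices of `h_u` for different colours of `uw` are disjoint parts of the slice in which
`uw` is left free. Once every edge is free, `M_v = ‖h_v‖²`. All sums are taken in `ℝ≥0∞`, where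
they exist; summability of the real sum follows from the finiteness of the bound.
-/

noncomputable section

/-- `H_k = ℓ²(C^k)`. -/
abbrev Hk (C : Type) (k : ℕ) : Type := lp (fun _ : (Fin k → C) => ℝ) 2

/-- `S_k`-invariance of an element of `H_k = ℓ²(C^k)`. -/
def SkInv {C : Type} {k : ℕ} (h : Hk C k) : Prop :=
  ∀ (σ : Equiv.Perm (Fin k)) (c : Fin k → C), h (c ∘ σ) = h c

/-- Combine `a : Fin l → C` (first `l` coordinates) and `b : Fin (k-l) → C` (remaining
coordinates) into a single tuple in `C^k`. -/
def splice {C : Type} {k l : ℕ} (hl : l ≤ k) (a : Fin l → C) (b : Fin (k - l) → C) :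
    Fin k → C :=
  fun i => if h : (i : ℕ) < l then a ⟨i, h⟩
    else b ⟨(i : ℕ) - l, by have := i.isLt; omega⟩

/-- The `ℓ²(C^{k-l})`-norm of the slice `h(c₁,…,c_l) : (c_{l+1},…,c_k) ↦ h(c₁,…,c_k)`. -/
def sliceNorm {C : Type} {k : ℕ} (h : Hk C k) {l : ℕ} (hl : l ≤ k) (a : Fin l → C) : ℝ :=
  Real.sqrt (∑' b : Fin (k - l) → C, (h (splice hl a b)) ^ 2)

open scoped ENNReal
open Function

theorem ENNReal.tsum_rpow_half_mul_le {ι : Type*} (a b : ι → ℝ≥0∞) :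
    ∑' i, a i ^ (1 / 2 : ℝ) * b i ^ (1 / 2 : ℝ) ≤
      (∑' i, a i) ^ (1 / 2 : ℝ) * (∑' i, b i) ^ (1 / 2 : ℝ) := by
  let _ : MeasurableSpace ι := ⊤
  have hsq : ∀ x : ℝ≥0∞, (x ^ (1 / 2 : ℝ)) ^ (2 : ℝ) = x := fun x => by
    rw [← ENNReal.rpow_mul]; norm_num
  have := ENNReal.lintegral_mul_le_Lp_mul_Lq MeasureTheory.Measure.count
    Real.HolderConjugate.two_two (f := fun i => a i ^ (1 / 2 : ℝ))
    (g := fun i => b i ^ (1 / 2 : ℝ)) (measurable_from_top).aemeasurable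
    (measurable_from_top).aemeasurable
  simpa only [MeasureTheory.lintegral_count, Pi.mul_apply, hsq] using this

theorem summable_and_tsum_le_of_tsum_ofReal_le {α : Type*} {f : α → ℝ} (hf : ∀ a, 0 ≤ f a)
    {B : ℝ} (hB : 0 ≤ B) (h : ∑' a, ENNReal.ofReal (f a) ≤ ENNReal.ofReal B) :
    Summable f ∧ ∑' a, f a ≤ B := by
  have hsum : Summable f := by
    simpa [ENNReal.toReal_ofReal (hf _)] using
      ENNReal.summable_toReal (ne_top_of_le_ne_top ENNReal.ofReal_ne_top h)
  refine ⟨hsum, ?_⟩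
  rwa [← ENNReal.ofReal_tsum_of_nonneg hf hsum, ENNReal.ofReal_le_ofReal_iff hB] at h

theorem tsum_prod_rpow_half_le_of_pair {ι V : Type*} [Fintype V] (g : V → ι → ℝ≥0∞)
    (G : V → ℝ≥0∞) {u w : V} (huw : u ≠ w) (hle : ∀ v i, g v i ≤ G v)
    (hu : ∑' i, g u i ≤ G u) (hw : ∑' i, g w i ≤ G w) :
    ∑' i, ∏ v, g v i ^ (1 / 2 : ℝ) ≤ ∏ v, G v ^ (1 / 2 : ℝ) := by
  classical
  set R := (Finset.univ.erase u).erase w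
  have split : ∀ F : V → ℝ≥0∞, ∏ v, F v = F u * F w * ∏ v ∈ R, F v := fun F => by
    rw [← Finset.mul_prod_erase _ F (Finset.mem_univ u), mul_assoc,
      ← Finset.mul_prod_erase _ F (Finset.mem_erase.2 ⟨huw.symm, Finset.mem_univ w⟩)]
  simp only [split]
  calc ∑' i, g u i ^ (1 / 2 : ℝ) * g w i ^ (1 / 2 : ℝ) * ∏ v ∈ R, g v i ^ (1 / 2 : ℝ)
      ≤ ∑' i, g u i ^ (1 / 2 : ℝ) * g w i ^ (1 / 2 : ℝ) * ∏ v ∈ R, G v ^ (1 / 2 : ℝ) := by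
        gcongr with i v; exact hle v i
    _ = (∑' i, g u i ^ (1 / 2 : ℝ) * g w i ^ (1 / 2 : ℝ)) * ∏ v ∈ R, G v ^ (1 / 2 : ℝ) :=
        ENNReal.tsum_mul_right
    _ ≤ (∑' i, g u i) ^ (1 / 2 : ℝ) * (∑' i, g w i) ^ (1 / 2 : ℝ) * ∏ v ∈ R, G v ^ (1 / 2 : ℝ) := by
        gcongr; exact ENNReal.tsum_rpow_half_mul_le _ _
    _ ≤ G u ^ (1 / 2 : ℝ) * G w ^ (1 / 2 : ℝ) * ∏ v ∈ R, G v ^ (1 / 2 : ℝ) := by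
        gcongr

section ConstrainedMass

variable {V E C : Type*} {X : V → Type*}

/-- `S v e c` is the set of configurations at `v` compatible with colour `c` on edge `e`. -/
def constrainedMass (f : ∀ v, X v → ℝ≥0∞) (S : ∀ v, E → C → Set (X v)) (v : V) (φ : E → C) :
    ℝ≥0∞ :=
  ∑' x : ⋂ e, S v e (φ e), f v x

theorem constrainedMass_of_isEmpty [IsEmpty E] (f : ∀ v, X v → ℝ≥0∞)
    (S : ∀ v, E → C → Set (X v)) (v : V) (φ : E → C) :
    constrainedMass f S v φ = ∑' x, f v x := by
  rw [constrainedMass, Set.iInter_of_empty, tsum_univ]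

theorem constrainedMass_comp_equiv {E' : Type*} (σ : E' ≃ E) (f : ∀ v, X v → ℝ≥0∞)
    (S : ∀ v, E → C → Set (X v)) (v : V) (φ : E → C) :
    constrainedMass f (fun v e => S v (σ e)) v (φ ∘ σ) = constrainedMass f S v φ := by
  simp only [constrainedMass, comp_apply]
  rw [σ.surjective.iInter_comp (fun e => S v e (φ e))]

theorem constrainedMass_option_elim' {E : Type*} (f : ∀ v, X v → ℝ≥0∞)
    (S : ∀ v, Option E → C → Set (X v)) (v : V) (c : C) (φ : E → C) :
    constrainedMass f S v (Option.elim' c φ) =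
      ∑' x : ↥(S v none c ∩ ⋂ e, S v (some e) (φ e)), f v x := by
  rw [constrainedMass, Set.iInter_option]
  rfl

theorem constrainedMass_option_le {E : Type*} (f : ∀ v, X v → ℝ≥0∞)
    (S : ∀ v, Option E → C → Set (X v)) (v : V) (c : C) (φ : E → C) :
    constrainedMass f S v (Option.elim' c φ) ≤
      constrainedMass f (fun v e => S v (some e)) v φ := by
  rw [constrainedMass_option_elim']
  exact ENNReal.tsum_mono_subtype _ Set.inter_subset_right

theorem tsum_constrainedMass_option_le {E : Type*} (f : ∀ v, X v → ℝ≥0∞)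
    (S : ∀ v, Option E → C → Set (X v)) (v : V) (hS : Pairwise (Disjoint on (S v none)))
    (φ : E → C) :
    ∑' c, constrainedMass f S v (Option.elim' c φ) ≤
      constrainedMass f (fun v e => S v (some e)) v φ := by
  simp only [constrainedMass_option_elim']
  rw [← ENNReal.tsum_biUnion]
  · exact ENNReal.tsum_mono_subtype _ (Set.iUnion_subset fun c => Set.inter_subset_right)
  · exact fun c _ c' _ hcc' => (hS hcc').mono Set.inter_subset_left Set.inter_subset_left

theorem tsum_prod_constrainedMass_le [Fintype V] [Finite E] (f : ∀ v, X v → ℝ≥0∞)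
    (S : ∀ v, E → C → Set (X v))
    (hS : ∀ e, ∃ u w, u ≠ w ∧ Pairwise (Disjoint on (S u e)) ∧ Pairwise (Disjoint on (S w e))) :
    ∑' φ : E → C, ∏ v, constrainedMass f S v φ ^ (1 / 2 : ℝ) ≤
      ∏ v, (∑' x, f v x) ^ (1 / 2 : ℝ) := by
  induction E using Finite.induction_empty_option with
  | of_equiv σ ih =>
    calc ∑' φ, ∏ v, constrainedMass f S v φ ^ (1 / 2 : ℝ)
        = ∑' φ, ∏ v, constrainedMass f (fun v e => S v (σ e)) v (φ ∘ σ) ^ (1 / 2 : ℝ) := by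
          simp only [constrainedMass_comp_equiv]
      _ = ∑' ψ, ∏ v, constrainedMass f (fun v e => S v (σ e)) v ψ ^ (1 / 2 : ℝ) :=
          (σ.symm.arrowCongr (Equiv.refl C)).tsum_eq
            (fun ψ => ∏ v, constrainedMass f (fun v e => S v (σ e)) v ψ ^ (1 / 2 : ℝ))
      _ ≤ _ := ih _ fun e => hS (σ e)
  | h_empty =>
    simp only [(hasSum_unique _).tsum_eq, constrainedMass_of_isEmpty, le_refl]
  | @h_option E _ ih =>
    obtain ⟨u, w, huw, hu, hw⟩ := hS none
    calc ∑' φ, ∏ v, constrainedMass f S v φ ^ (1 / 2 : ℝ)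
        = ∑' p : C × (E → C),
            ∏ v, constrainedMass f S v (Option.elim' p.1 p.2) ^ (1 / 2 : ℝ) :=
          (Equiv.piOptionEquivProd.symm.tsum_eq _).symm.trans <| tsum_congr fun p => by
            rcases p with ⟨c, φ⟩
            congr!
            ext (_ | e) <;> rfl
      _ = ∑' (φ : E → C) (c : C),
            ∏ v, constrainedMass f S v (Option.elim' c φ) ^ (1 / 2 : ℝ) := by
          rw [ENNReal.tsum_prod', ENNReal.tsum_comm]
      _ ≤ ∑' φ : E → C, ∏ v, constrainedMass f (fun v e => S v (some e)) v φ ^ (1 / 2 : ℝ) :=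
          ENNReal.tsum_le_tsum fun φ => tsum_prod_rpow_half_le_of_pair _ _ huw
            (fun v c => constrainedMass_option_le f S v c φ)
            (tsum_constrainedMass_option_le f S u hu φ)
            (tsum_constrainedMass_option_le f S w hw φ)
      _ ≤ _ := ih _ fun e => hS (some e)

end ConstrainedMass

theorem lp.summable_sq {α : Type*} (g : lp (fun _ : α => ℝ) 2) :
    Summable fun x => g x ^ 2 := by
  simpa [Real.norm_eq_abs, sq_abs] using
    (lp.memℓp g).summable (by norm_num : 0 < (2 : ℝ≥0∞).toReal)

theorem lp.ofReal_norm_eq_tsum_rpow_half {α : Type*} (g : lp (fun _ : α => ℝ) 2) :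
    ENNReal.ofReal ‖g‖ = (∑' x, ENNReal.ofReal (g x ^ 2)) ^ (1 / 2 : ℝ) := by
  have := lp.norm_rpow_eq_tsum (by norm_num : 0 < (2 : ℝ≥0∞).toReal) g
  simp only [ENNReal.toReal_ofNat, Real.rpow_two, Real.norm_eq_abs, sq_abs] at this
  rw [← ENNReal.ofReal_tsum_of_nonneg (fun x => sq_nonneg _) (lp.summable_sq g), ← this,
    ENNReal.ofReal_rpow_of_nonneg (sq_nonneg _) (by norm_num), ← Real.sqrt_eq_rpow,
    Real.sqrt_sq (norm_nonneg g)]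

section Slice

variable {C : Type} {k l : ℕ}

theorem splice_injective (hl : l ≤ k) (a : Fin l → C) : Injective (splice hl a) := by
  intro b b' hb
  funext j
  simpa [splice] using congrFun hb ⟨l + j, by omega⟩

theorem range_splice (hl : l ≤ k) (a : Fin l → C) :
    Set.range (splice hl a) = {x | ∀ i, x (Fin.castLE hl i) = a i} := by
  ext x
  constructor
  · rintro ⟨b, rfl⟩ i
    simp [splice]
  · intro hx
    refine ⟨fun j => x ⟨l + j, by omega⟩, funext fun i => ?_⟩
    by_cases hi : (i : ℕ) < l
    · simpa [splice, hi] using (hx ⟨i, hi⟩).symm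
    · simp only [splice, hi, dite_false]
      exact congrArg x (Fin.ext (by simp only; omega))

theorem sliceNorm_nonneg (h : Hk C k) (hl : l ≤ k) (a : Fin l → C) : 0 ≤ sliceNorm h hl a :=
  Real.sqrt_nonneg _

theorem ofReal_sliceNorm (h : Hk C k) (hl : l ≤ k) (a : Fin l → C) :
    ENNReal.ofReal (sliceNorm h hl a) =
      (∑' x : {x : Fin k → C | ∀ i, x (Fin.castLE hl i) = a i}, ENNReal.ofReal (h x ^ 2)) ^
        (1 / 2 : ℝ) := by
  have hsum : Summable fun b => h (splice hl a b) ^ 2 :=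
    (lp.summable_sq h).comp_injective (splice_injective hl a)
  rw [← range_splice, tsum_range (fun x => ENNReal.ofReal (h x ^ 2)) (splice_injective hl a),
    sliceNorm, Real.sqrt_eq_rpow, ← ENNReal.ofReal_rpow_of_nonneg
      (tsum_nonneg fun _ => sq_nonneg _) (by norm_num),
    ENNReal.ofReal_tsum_of_nonneg (fun _ => sq_nonneg _) hsum]

end Slice

theorem Sym2.exists_ne_mem_mem_of_not_isDiag {α : Type*} {z : Sym2 α} (hz : ¬z.IsDiag) :
    ∃ u w, u ≠ w ∧ u ∈ z ∧ w ∈ z := by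
  induction z using Sym2.ind with
  | h u w => exact ⟨u, w, fun huw => hz (Sym2.mk_isDiag_iff.2 huw), mem_mk_left u w,
      mem_mk_right u w⟩

section EdgeConstraint

variable {ι K E C : Type*}

def edgeConstraint (p : ι → K) (δ : ι → E) (e : E) (c : C) : Set (K → C) :=
  {x | ∀ i, δ i = e → x (p i) = c}

theorem pairwise_disjoint_edgeConstraint (p : ι → K) (δ : ι → E) {e : E}
    (he : e ∈ Set.range δ) :
    Pairwise (Disjoint on (edgeConstraint (C := C) p δ e)) := by
  obtain ⟨i, rfl⟩ := he
  intro c c' hcc'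
  rw [onFun, Set.disjoint_left]
  exact fun x hx hx' => hcc' ((hx i rfl).symm.trans (hx' i rfl))

theorem iInter_edgeConstraint (p : ι → K) (δ : ι → E) (φ : E → C) :
    ⋂ e, edgeConstraint p δ e (φ e) = {x | ∀ i, x (p i) = φ (δ i)} := by
  ext x
  simp only [edgeConstraint, Set.mem_iInter, Set.mem_ofPred_eq]
  rw [forall_comm]
  simp only [forall_eq']

end EdgeConstraint

theorem stmt10_general (C : Type) (n : ℕ) (k : Fin n → ℕ)
    (h : ∀ i : Fin n, Hk C (k i))
    (E : Type) [Fintype E] (ends : E → Sym2 (Fin n)) (hloopless : ∀ e, ¬ (ends e).IsDiag)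
    (d : Fin n → ℕ) (δ : ∀ v : Fin n, Fin (d v) → E)
    (hrange : ∀ (v : Fin n) (e : E), v ∈ ends e ↔ e ∈ Set.range (δ v))
    (hdeg : ∀ v, d v ≤ k v) :
    Summable (fun φ : E → C => ∏ v : Fin n, sliceNorm (h v) (hdeg v) (fun i => φ (δ v i))) ∧
    ∑' φ : E → C, ∏ v : Fin n, sliceNorm (h v) (hdeg v) (fun i => φ (δ v i)) ≤
      ∏ v : Fin n, ‖h v‖ := by
  set S : ∀ v, E → C → Set (Fin (k v) → C) := fun v => edgeConstraint (Fin.castLE (hdeg v)) (δ v)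
  have hS : ∀ e, ∃ u w, u ≠ w ∧ Pairwise (Disjoint on (S u e)) ∧
      Pairwise (Disjoint on (S w e)) := by
    intro e
    obtain ⟨u, w, huw, hu, hw⟩ := Sym2.exists_ne_mem_mem_of_not_isDiag (hloopless e)
    exact ⟨u, w, huw, pairwise_disjoint_edgeConstraint _ _ ((hrange u e).1 hu),
      pairwise_disjoint_edgeConstraint _ _ ((hrange w e).1 hw)⟩
  set f : ∀ v, (Fin (k v) → C) → ℝ≥0∞ := fun v x => ENNReal.ofReal (h v x ^ 2)
  have hslice : ∀ φ : E → C,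
      ENNReal.ofReal (∏ v, sliceNorm (h v) (hdeg v) (fun i => φ (δ v i))) =
        ∏ v, constrainedMass f S v φ ^ (1 / 2 : ℝ) := fun φ => by
    rw [ENNReal.ofReal_prod_of_nonneg fun v _ => sliceNorm_nonneg _ _ _]
    refine Finset.prod_congr rfl fun v _ => ?_
    rw [ofReal_sliceNorm, constrainedMass, iInter_edgeConstraint]
  have hnorm : ENNReal.ofReal (∏ v, ‖h v‖) = ∏ v, (∑' x, f v x) ^ (1 / 2 : ℝ) := by
    rw [ENNReal.ofReal_prod_of_nonneg fun v _ => norm_nonneg _]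
    exact Finset.prod_congr rfl fun v _ => lp.ofReal_norm_eq_tsum_rpow_half (h v)
  refine summable_and_tsum_le_of_tsum_ofReal_le
    (fun φ => Finset.prod_nonneg fun v _ => sliceNorm_nonneg _ _ _)
    (Finset.prod_nonneg fun v _ => norm_nonneg _) ?_
  simpa only [hslice, hnorm] using tsum_prod_constrainedMass_le f S hS

/-- Let `k₁,…,k_n ∈ ℕ`, let `h_i ∈ H_{k_i}^{S_{k_i}}`, and let
`F = ([n], E)` be a finite loopless graph (multiple edges allowed, encoded by an edge type
`E` with an endpoint map `ends` to non-diagonal unordered pairs, and with `δ(v)` an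
enumeration of the `d v = deg(v)` edges incident with `v`), with `deg(i) ≤ k_i` for each
`i`.  Then `Σ_{φ:E→C} ∏_{v∈[n]} ‖h_v(φ(δ(v)))‖ ≤ ∏_{v∈[n]} ‖h_v‖`; in particular the
(possibly infinite) sum on the left converges. -/
theorem stmt10 (C : Type) (n : ℕ) (k : Fin n → ℕ)
    (h : ∀ i : Fin n, Hk C (k i)) (hinv : ∀ i, SkInv (h i))
    (E : Type) [Fintype E] (ends : E → Sym2 (Fin n)) (hloopless : ∀ e, ¬ (ends e).IsDiag)
    (d : Fin n → ℕ) (δ : ∀ v : Fin n, Fin (d v) → E)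
    (hinj : ∀ v, Function.Injective (δ v))
    (hrange : ∀ (v : Fin n) (e : E), v ∈ ends e ↔ e ∈ Set.range (δ v))
    (hdeg : ∀ v, d v ≤ k v) :
    Summable (fun φ : E → C => ∏ v : Fin n, sliceNorm (h v) (hdeg v) (fun i => φ (δ v i))) ∧
    ∑' φ : E → C, ∏ v : Fin n, sliceNorm (h v) (hdeg v) (fun i => φ (δ v i)) ≤
      ∏ v : Fin n, ‖h v‖ :=
  stmt10_general C n k h E ends hloopless d δ hrange hdeg
end
end

section
/- Let C be a set and H_k := ℓ²(C^k). Let F be a finite loopless graph (multiple edges allowed) and let h = (h_v)_{v∈V(F)} with h_v ∈ H_{deg(v)}^{S_{deg(v)}} for each v. Then the sum Σ_{φ:E(F)→C} ∏_{v∈V(F)} h_v(φ(δ(v))) converges absolutely, and its absolute value is at most ∏_{v∈V(F)} ‖h_v‖; in particular the partition function value π_F(h) is a well-defined real number. -/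
/-!
Sum out the edges one at a time, working in `ℝ≥0∞` so that no convergence has to be checked
along the way. An edge `e` joins two distinct vertices `a` and `b`, and only their factors
depend on `φ e`; by Cauchy–Schwarz the sum over `φ e` of the product of these two factors is
at most the product of their `ℓ²`-norms in the coordinate `e`, which are new vertex factors
depending only on the remaining edges at `a` and `b`. Once every edge has been summed out, the
factor at `v` is the `ℓ²`-norm of `h_v` over the assignments of the edges at `v`, which is at most
`‖h_v‖` because such an assignment is determined by the tuple `φ(δ(v))`. The finite bound in
`ℝ≥0∞` then gives absolute convergence.
-/

noncomputable section

open Finset Function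
open scoped ENNReal NNReal

theorem ENNReal.inner_le_Lp_mul_Lq_tsum {ι : Type*} (f g : ι → ℝ≥0∞) {p q : ℝ}
    (hpq : p.HolderConjugate q) :
    ∑' i, f i * g i ≤ (∑' i, f i ^ p) ^ (1 / p) * (∑' i, g i ^ q) ^ (1 / q) :=
  ENNReal.summable.tsum_le_of_sum_le fun s => (ENNReal.inner_le_Lp_mul_Lq s f g hpq).trans <| by
    have := hpq.pos
    have := hpq.symm.pos
    gcongr <;> exact ENNReal.sum_le_tsum s

theorem lp.tsum_enorm_rpow_eq {ι : Type*} {G : ι → Type*} [∀ i, NormedAddCommGroup (G i)]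
    {p : ℝ≥0∞} [Fact (1 ≤ p)] (hp : 0 < p.toReal) (f : lp G p) :
    ∑' i, ‖f i‖ₑ ^ p.toReal = ‖f‖ₑ ^ p.toReal := by
  calc ∑' i, ‖f i‖ₑ ^ p.toReal = ∑' i, ENNReal.ofReal (‖f i‖ ^ p.toReal) :=
        tsum_congr fun i => by
          rw [← ofReal_norm, ENNReal.ofReal_rpow_of_nonneg (norm_nonneg _) hp.le]
    _ = ENNReal.ofReal (∑' i, ‖f i‖ ^ p.toReal) :=
        (ENNReal.ofReal_tsum_of_nonneg (fun _ => by positivity) ((lp.memℓp f).summable hp)).symm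
    _ = ‖f‖ₑ ^ p.toReal := by
        rw [← lp.norm_rpow_eq_tsum hp, ← ENNReal.ofReal_rpow_of_nonneg (norm_nonneg _) hp.le,
          ofReal_norm]

theorem summable_abs_and_abs_tsum_le_of_tsum_enorm_le {α : Type*} {f : α → ℝ} {B : ℝ≥0}
    (hf : ∑' a, ‖f a‖ₑ ≤ B) : Summable (fun a => |f a|) ∧ |∑' a, f a| ≤ B := by
  refine ⟨?_, ?_⟩
  · simpa only [Real.norm_eq_abs] using
      tsum_enorm_ne_top_iff_summable_norm.1 (ne_top_of_le_ne_top ENNReal.coe_ne_top hf)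
  · rw [← Real.norm_eq_abs]
    exact_mod_cast enorm_tsum_le_tsum_enorm.trans hf

section

variable {E C : Type*} [DecidableEq E] (x : E → C)

theorem updateFinset_comp_injective {κ : Type*} {s : Finset E} {δ : κ → E}
    (hs : ↑s ⊆ Set.range δ) : Injective fun y : s → C => updateFinset x s y ∘ δ := by
  intro y y' hyy'
  funext ⟨e, he⟩
  obtain ⟨i, rfl⟩ := hs he
  simpa [updateFinset, he] using congrFun hyy' i

theorem tsum_updateFinset_eq_tsum_tsum_update (g : (E → C) → ℝ≥0∞) {s : Finset E} {e : E}
    (he : e ∈ s) :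
    ∑' y : s → C, g (updateFinset x s y) =
      ∑' y : s.erase e → C, ∑' c, g (update (updateFinset x (s.erase e) y) e c) := by
  have hdisj : Disjoint (s.erase e) {e} := disjoint_singleton_right.2 (notMem_erase e s)
  have hs : s.erase e ∪ {e} = s := by simp [he]
  calc ∑' y : s → C, g (updateFinset x s y)
      = ∑' y : (s.erase e ∪ {e} : Finset E) → C, g (updateFinset x _ y) := by rw [hs]
    _ = ∑' p : (s.erase e → C) × (({e} : Finset E) → C),
          g (updateFinset x _ (Equiv.piFinsetUnion (fun _ => C) hdisj p)) :=
        ((Equiv.piFinsetUnion (fun _ => C) hdisj).tsum_eq _).symm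
    _ = ∑' y : s.erase e → C, ∑' c, g (update (updateFinset x (s.erase e) y) e c) := by
        rw [ENNReal.tsum_prod']
        refine tsum_congr fun y => ?_
        rw [← (Equiv.funUnique ({e} : Finset E) C).symm.tsum_eq]
        simp [update_updateFinset (notMem_erase e s)]

def l2NormOn (s : Finset E) (f : (E → C) → ℝ≥0∞) : ℝ≥0∞ :=
  (∑' y : s → C, f (updateFinset x s y) ^ (2 : ℝ)) ^ (1 / 2 : ℝ)

theorem l2NormOn_empty (f : (E → C) → ℝ≥0∞) : l2NormOn x ∅ f = f x := by
  rw [l2NormOn, (hasSum_unique _).tsum_eq, updateFinset_empty, one_div,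
    ENNReal.rpow_rpow_inv two_ne_zero]

theorem l2NormOn_enorm_comp_le {κ G : Type*} [NormedAddCommGroup G] {s : Finset E} {δ : κ → E}
    (hs : ↑s ⊆ Set.range δ) (f : lp (fun _ : κ → C => G) 2) :
    l2NormOn x s (fun φ => ‖f (φ ∘ δ)‖ₑ) ≤ ‖f‖ₑ := by
  rw [l2NormOn, one_div, ENNReal.rpow_inv_le_iff two_pos]
  calc ∑' y : s → C, ‖f (updateFinset x s y ∘ δ)‖ₑ ^ (2 : ℝ)
      ≤ ∑' c, ‖f c‖ₑ ^ (2 : ℝ) :=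
        ENNReal.tsum_comp_le_tsum_of_injective (updateFinset_comp_injective x hs) _
    _ = ‖f‖ₑ ^ (2 : ℝ) := by simpa using lp.tsum_enorm_rpow_eq (p := 2) (by simp) f

def l2Marginal (e : E) (f : (E → C) → ℝ≥0∞) (z : E → C) : ℝ≥0∞ :=
  (∑' c, f (update z e c) ^ (2 : ℝ)) ^ (1 / 2 : ℝ)

theorem DependsOn.l2Marginal {f : (E → C) → ℝ≥0∞} {s : Finset E}
    (hf : DependsOn f s) (e : E) : DependsOn (l2Marginal e f) (s.erase e) := fun z z' hzz' => by
  simp only [_root_.l2Marginal, tsum_congr fun c => congrArg (· ^ (2 : ℝ)) ((hf.update e c) hzz')]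

theorem l2NormOn_erase_l2Marginal (f : (E → C) → ℝ≥0∞) {s : Finset E} {e : E} (he : e ∈ s) :
    l2NormOn x (s.erase e) (l2Marginal e f) = l2NormOn x s f := by
  simp only [l2NormOn, l2Marginal, one_div, ENNReal.rpow_inv_rpow two_ne_zero]
  rw [tsum_updateFinset_eq_tsum_tsum_update x (fun φ => f φ ^ (2 : ℝ)) he]

theorem tsum_prod_update_le_prod_l2Marginal {V : Type*} [Fintype V] [DecidableEq V]
    {A : V → Finset E} {F : V → (E → C) → ℝ≥0∞} (hF : ∀ v, DependsOn (F v) (A v)) {e : E} {a b : V} (hab : a ≠ b)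
    (hA : ({v | e ∈ A v} : Finset V) = {a, b}) (z : E → C) :
    ∑' c, ∏ v, F v (update z e c) ≤ ∏ v, if e ∈ A v then l2Marginal e (F v) z else F v z := by
  set R := ∏ v with e ∉ A v, F v z
  have hsplit (c : C) : ∏ v, F v (update z e c) = F a (update z e c) * F b (update z e c) * R := by
    rw [← prod_filter_mul_prod_filter_not univ (fun v => e ∈ A v), hA, prod_pair hab]
    refine congrArg _ (prod_congr rfl fun v hv => hF v fun i hi => update_of_ne ?_ c z)
    rintro rfl
    exact (mem_filter.1 hv).2 hi
  calc ∑' c, ∏ v, F v (update z e c)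
      = (∑' c, F a (update z e c) * F b (update z e c)) * R := by
        simp only [hsplit, ENNReal.tsum_mul_right]
    _ ≤ l2Marginal e (F a) z * l2Marginal e (F b) z * R := by
        gcongr
        exact ENNReal.inner_le_Lp_mul_Lq_tsum _ _ .two_two
    _ = ∏ v, if e ∈ A v then l2Marginal e (F v) z else F v z := by
        rw [prod_ite, hA, prod_pair hab]

theorem tsum_prod_updateFinset_le_prod_l2NormOn {V : Type*} [Fintype V] (S : Finset E)
    (A : V → Finset E) (hAS : ∀ v, A v ⊆ S) (hA : ∀ e ∈ S, #{v | e ∈ A v} = 2)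
    (F : V → (E → C) → ℝ≥0∞) (hF : ∀ v, DependsOn (F v) (A v)) :
    ∑' y : S → C, ∏ v, F v (updateFinset x S y) ≤ ∏ v, l2NormOn x (A v) (F v) := by
  classical
  induction S using Finset.induction_on generalizing A F with
  | empty =>
    have hA0 (v : V) : A v = ∅ := subset_empty.1 (hAS v)
    simp only [hA0, l2NormOn_empty, (hasSum_unique _).tsum_eq, updateFinset_empty, le_refl]
  | insert e S he ih =>
    obtain ⟨a, b, hab, hpair⟩ := card_eq_two.1 (hA e (mem_insert_self e S))
    set G : V → (E → C) → ℝ≥0∞ := fun v => if e ∈ A v then l2Marginal e (F v) else F v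
    have hG (v : V) : DependsOn (G v) ((A v).erase e) := by
      by_cases hv : e ∈ A v
      · simpa only [G, if_pos hv] using (hF v).l2Marginal e
      · simpa only [G, if_neg hv, erase_eq_of_notMem hv] using hF v
    have hAS' (v : V) : (A v).erase e ⊆ S := subset_insert_iff.1 (hAS v)
    have hA' : ∀ e' ∈ S, #{v | e' ∈ (A v).erase e} = 2 := fun e' he' => by
      have hne : e' ≠ e := ne_of_mem_of_not_mem he' he
      simpa only [mem_erase, hne, ne_eq, not_false_eq_true, true_and] using
        hA e' (mem_insert_of_mem he')
    have hnorm (v : V) : l2NormOn x ((A v).erase e) (G v) = l2NormOn x (A v) (F v) := by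
      by_cases hv : e ∈ A v
      · simpa only [G, if_pos hv] using l2NormOn_erase_l2Marginal x (F v) hv
      · simp only [G, if_neg hv, erase_eq_of_notMem hv]
    calc ∑' y : ↥(insert e S) → C, ∏ v, F v (updateFinset x _ y)
        = ∑' y : S → C, ∑' c, ∏ v, F v (update (updateFinset x S y) e c) := by
          rw [tsum_updateFinset_eq_tsum_tsum_update x (fun φ => ∏ v, F v φ) (mem_insert_self e S),
            erase_insert he]
      _ ≤ ∑' y : S → C, ∏ v, G v (updateFinset x S y) :=
          ENNReal.tsum_le_tsum fun y => by
            simpa only [G, ite_apply] using tsum_prod_update_le_prod_l2Marginal hF hab hpair _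
      _ ≤ ∏ v, l2NormOn x (A v) (F v) := by
          simpa only [hnorm] using ih _ hAS' hA' G hG

theorem tsum_prod_le_prod_l2NormOn [Fintype E] {V : Type*} [Fintype V] (A : V → Finset E)
    (hA : ∀ e, #{v | e ∈ A v} = 2) (F : V → (E → C) → ℝ≥0∞) (hF : ∀ v, DependsOn (F v) (A v)) :
    ∑' φ : E → C, ∏ v, F v φ ≤ ∏ v, l2NormOn x (A v) (F v) := by
  have := tsum_prod_updateFinset_le_prod_l2NormOn x univ A (fun v => subset_univ _)
    (fun e _ => hA e) F hF
  rw [← (Equiv.arrowCongr (Equiv.subtypeUnivEquiv mem_univ) (Equiv.refl C)).symm.tsum_eq] at this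
  simpa [updateFinset_univ] using this

end

theorem stmt17_general (C : Type) {V : Type} [Fintype V]
    (E : Type) [Fintype E] (ends : E → Sym2 V) (hloopless : ∀ e, ¬ (ends e).IsDiag)
    (d : V → ℕ) (δ : ∀ v : V, Fin (d v) → E)
    (hrange : ∀ (v : V) (e : E), v ∈ ends e ↔ e ∈ Set.range (δ v))
    (h : ∀ v : V, Hk C (d v)) :
    Summable (fun φ : E → C => |∏ v : V, h v (fun i => φ (δ v i))|) ∧
    |∑' φ : E → C, ∏ v : V, h v (fun i => φ (δ v i))| ≤ ∏ v : V, ‖h v‖ := by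
  classical
  suffices hbound : ∑' φ : E → C, ‖∏ v, h v (φ ∘ δ v)‖ₑ ≤ ↑(∏ v, ‖h v‖₊) by
    simpa [comp_def] using summable_abs_and_abs_tsum_le_of_tsum_enorm_le hbound
  -- `l2NormOn` needs a base point; without one the sum is empty
  rcases isEmpty_or_nonempty (E → C) with _ | ⟨⟨x⟩⟩
  · simp
  set A : V → Finset E := fun v => univ.image (δ v)
  have hA (e : E) : #{v | e ∈ A v} = 2 := by
    rw [← Sym2.card_toFinset_of_not_isDiag _ (hloopless e)]
    congr 1
    ext v
    simp [A, hrange]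
  have hF (v : V) : DependsOn (fun φ : E → C => ‖h v (φ ∘ δ v)‖ₑ) (A v) := fun φ ψ hφψ =>
    congrArg (‖h v ·‖ₑ) (funext fun i => hφψ _ (by simp [A]))
  calc ∑' φ : E → C, ‖∏ v, h v (φ ∘ δ v)‖ₑ = ∑' φ : E → C, ∏ v, ‖h v (φ ∘ δ v)‖ₑ := by
        simp [enorm_eq_nnnorm, nnnorm_prod]
    _ ≤ ∏ v, l2NormOn x (A v) (fun φ => ‖h v (φ ∘ δ v)‖ₑ) := tsum_prod_le_prod_l2NormOn x A hA _ hF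
    _ ≤ ∏ v, ‖h v‖ₑ := prod_le_prod' fun v _ => l2NormOn_enorm_comp_le x (by simp [A]) (h v)
    _ = ↑(∏ v, ‖h v‖₊) := by simp [enorm_eq_nnnorm]

/-- Let `F` be a finite loopless graph (multiple edges allowed, encoded
by an edge type `E` with an endpoint map `ends` to non-diagonal unordered pairs, and with
`δ(v)` an enumeration of the `d v = deg(v)` edges incident with `v`) and let
`h_v ∈ H_{deg v}^{S_{deg v}}` for each vertex `v`.  Then the sum
`Σ_{φ:E(F)→C} ∏_{v∈V(F)} h_v(φ(δ(v)))` converges absolutely, and its absolute value is at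
most `∏_{v∈V(F)} ‖h_v‖`; in particular `π_F(h)` is a well-defined real number. -/
theorem stmt17 (C : Type) {V : Type} [Fintype V]
    (E : Type) [Fintype E] (ends : E → Sym2 V) (hloopless : ∀ e, ¬ (ends e).IsDiag)
    (d : V → ℕ) (δ : ∀ v : V, Fin (d v) → E)
    (hinj : ∀ v, Function.Injective (δ v))
    (hrange : ∀ (v : V) (e : E), v ∈ ends e ↔ e ∈ Set.range (δ v))
    (h : ∀ v : V, Hk C (d v)) (hinv : ∀ v, SkInv (h v)) :
    Summable (fun φ : E → C => |∏ v : V, h v (fun i => φ (δ v i))|) ∧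
    |∑' φ : E → C, ∏ v : V, h v (fun i => φ (δ v i))| ≤ ∏ v : V, ‖h v‖ :=
  stmt17_general C E ends hloopless d δ hrange h
end
end
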